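/- Let ξ₁, ξ₂, ξ₃ be real constants with ξ₃ ≠ 0, ξ₂ + ξ₃ ≠ 0, and (2/3)ξ₁ + (4/3)ξ₂ + ξ₃ ≠ 0, and define Q_n(Q) = ξ₁(nn − I/3)(nn:Q) + ξ₂(nn·Q + Q·nn − (2/3)I(nn:Q)) + ξ₃Q on symmetric traceless 3×3 matrices. Then Q_n is invertible, and its inverse has the same form ψ₁(nn − I/3)(nn:Q) + ψ₂(nn·Q + Q·nn − (2/3)I(nn:Q)) + ψ₃Q where ψ₃ξ₃ = 1, ψ₂(ξ₂+ξ₃) + ψ₃ξ₂ = 0, and ψ₁((2/3)ξ₁ + (4/3)ξ₂ + ξ₃) + ψ₂((4/3)ξ₁ + (2/3)ξ₂) + ψ₃ξ₁ = 0. -/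

import Mathlib

/-!
Write `P = n ⊗ n`. For a unit vector `n` it is a rank-one orthogonal projection, so `P² = P`,
`P Q P = (P : Q) P`, `P : (P Q) = P : (Q P) = P : Q` and `P : I = P : P = 1`. With these, the
composite of two operators of the form of `Q_n` is again of that form, with coefficients symmetric
in the two triples and triangular in each, and the identity has coefficients `(0, 0, 1)`. The
inverse comes from solving the triangular system, whose pivots are the three nonzero quantities.
-/

open Matrix

/-- Frobenius inner product of 3×3 matrices. -/
def frob (A B : Matrix (Fin 3) (Fin 3) ℝ) : ℝ := ∑ i, ∑ j, A i j * B i j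

/-- `Q_n(Q) = ξ₁(nn − I/3)(nn:Q) + ξ₂(nn·Q + Q·nn − (2/3)I(nn:Q)) + ξ₃Q`. -/
noncomputable def Qnop (ξ₁ ξ₂ ξ₃ : ℝ) (n : Fin 3 → ℝ)
    (Q : Matrix (Fin 3) (Fin 3) ℝ) : Matrix (Fin 3) (Fin 3) ℝ :=
  (ξ₁ * frob (vecMulVec n n) Q) • (vecMulVec n n - (1 / 3 : ℝ) • (1 : Matrix (Fin 3) (Fin 3) ℝ)) +
  ξ₂ • (vecMulVec n n * Q + Q * vecMulVec n n -
    ((2 / 3 : ℝ) * frob (vecMulVec n n) Q) • (1 : Matrix (Fin 3) (Fin 3) ℝ)) +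
  ξ₃ • Q

section Frob

variable (A B C : Matrix (Fin 3) (Fin 3) ℝ)

theorem frob_eq_trace : frob A B = trace (Aᵀ * B) := by
  simp only [frob, trace, diag, mul_apply, transpose_apply]
  exact Finset.sum_comm

theorem frob_add_right : frob A (B + C) = frob A B + frob A C := by
  simp only [frob_eq_trace, Matrix.mul_add, trace_add]

theorem frob_sub_right : frob A (B - C) = frob A B - frob A C := by
  simp only [frob_eq_trace, Matrix.mul_sub, trace_sub]

theorem frob_smul_right (c : ℝ) : frob A (c • B) = c * frob A B := by
  simp only [frob_eq_trace, Matrix.mul_smul, trace_smul, smul_eq_mul]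

end Frob

section Projection

variable {n : Fin 3 → ℝ}

theorem frob_vecMulVec_self (Q : Matrix (Fin 3) (Fin 3) ℝ) :
    frob (vecMulVec n n) Q = trace (vecMulVec n n * Q) := by
  rw [frob_eq_trace, transpose_vecMulVec]

theorem vecMulVec_self_mul_self (hn : n ⬝ᵥ n = 1) :
    vecMulVec n n * vecMulVec n n = vecMulVec n n := by
  rw [vecMulVec_mul_vecMulVec, hn, one_smul]

theorem frob_vecMulVec_self_one (hn : n ⬝ᵥ n = 1) : frob (vecMulVec n n) 1 = 1 := by
  rw [frob_vecMulVec_self, Matrix.mul_one, trace_vecMulVec, hn]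

theorem frob_vecMulVec_self_self (hn : n ⬝ᵥ n = 1) :
    frob (vecMulVec n n) (vecMulVec n n) = 1 := by
  rw [frob_vecMulVec_self, vecMulVec_self_mul_self hn, trace_vecMulVec, hn]

theorem frob_vecMulVec_self_mul_left (hn : n ⬝ᵥ n = 1) (Q : Matrix (Fin 3) (Fin 3) ℝ) :
    frob (vecMulVec n n) (vecMulVec n n * Q) = frob (vecMulVec n n) Q := by
  rw [frob_vecMulVec_self, frob_vecMulVec_self, ← Matrix.mul_assoc, vecMulVec_self_mul_self hn]

theorem frob_vecMulVec_self_mul_right (hn : n ⬝ᵥ n = 1) (Q : Matrix (Fin 3) (Fin 3) ℝ) :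
    frob (vecMulVec n n) (Q * vecMulVec n n) = frob (vecMulVec n n) Q := by
  rw [frob_vecMulVec_self, frob_vecMulVec_self, trace_mul_comm, Matrix.mul_assoc,
    vecMulVec_self_mul_self hn, trace_mul_comm]

theorem vecMulVec_self_mul_mul_vecMulVec_self (Q : Matrix (Fin 3) (Fin 3) ℝ) :
    vecMulVec n n * Q * vecMulVec n n = frob (vecMulVec n n) Q • vecMulVec n n := by
  rw [frob_vecMulVec_self, vecMulVec_mul, vecMulVec_mul_vecMulVec, vecMulVec_smul,
    trace_vecMulVec, dotProduct_comm]

theorem Qnop_zero_zero_one (Q : Matrix (Fin 3) (Fin 3) ℝ) : Qnop 0 0 1 n Q = Q := by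
  simp [Qnop]

theorem Qnop_Qnop (hn : n ⬝ᵥ n = 1) (ψ₁ ψ₂ ψ₃ ξ₁ ξ₂ ξ₃ : ℝ) (Q : Matrix (Fin 3) (Fin 3) ℝ) :
    Qnop ψ₁ ψ₂ ψ₃ n (Qnop ξ₁ ξ₂ ξ₃ n Q) =
      Qnop (ψ₁ * ((2 / 3) * ξ₁ + (4 / 3) * ξ₂ + ξ₃) + ψ₂ * ((4 / 3) * ξ₁ + (2 / 3) * ξ₂) + ψ₃ * ξ₁)
        (ψ₂ * (ξ₂ + ξ₃) + ψ₃ * ξ₂) (ψ₃ * ξ₃) n Q := by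
  have mul_mul_self (M : Matrix (Fin 3) (Fin 3) ℝ) :
      M * vecMulVec n n * vecMulVec n n = M * vecMulVec n n := by
    rw [Matrix.mul_assoc, vecMulVec_self_mul_self hn]
  simp only [Qnop, frob_add_right, frob_sub_right, frob_smul_right, frob_vecMulVec_self_one hn,
    frob_vecMulVec_self_self hn, frob_vecMulVec_self_mul_left hn, frob_vecMulVec_self_mul_right hn]
  simp only [smul_sub, smul_add, smul_smul, Matrix.mul_add, Matrix.add_mul, Matrix.sub_mul,
    Matrix.mul_sub, Matrix.mul_one, Matrix.one_mul, Matrix.mul_smul, Matrix.smul_mul,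
    ← Matrix.mul_assoc, vecMulVec_self_mul_self hn, mul_mul_self,
    vecMulVec_self_mul_mul_vecMulVec_self]
  match_scalars <;> ring

theorem Qnop_comm (hn : n ⬝ᵥ n = 1) (ψ₁ ψ₂ ψ₃ ξ₁ ξ₂ ξ₃ : ℝ) (Q : Matrix (Fin 3) (Fin 3) ℝ) :
    Qnop ψ₁ ψ₂ ψ₃ n (Qnop ξ₁ ξ₂ ξ₃ n Q) = Qnop ξ₁ ξ₂ ξ₃ n (Qnop ψ₁ ψ₂ ψ₃ n Q) := by
  rw [Qnop_Qnop hn, Qnop_Qnop hn]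
  congr 1 <;> ring

end Projection

/-- If `ξ₃ ≠ 0`, `ξ₂ + ξ₃ ≠ 0`, `(2/3)ξ₁ + (4/3)ξ₂ + ξ₃ ≠ 0`, then `Q_n` is
invertible on symmetric traceless matrices, with inverse of the same form with
coefficients `ψ₁, ψ₂, ψ₃` satisfying the stated linear equations. -/
theorem Qnop_invertible (ξ₁ ξ₂ ξ₃ : ℝ) (n : Fin 3 → ℝ) (hn : ∑ i, n i ^ 2 = 1)
    (h3 : ξ₃ ≠ 0) (h23 : ξ₂ + ξ₃ ≠ 0)
    (h123 : (2 / 3) * ξ₁ + (4 / 3) * ξ₂ + ξ₃ ≠ 0) :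
    ∃ ψ₁ ψ₂ ψ₃ : ℝ,
      ψ₃ * ξ₃ = 1 ∧
      ψ₂ * (ξ₂ + ξ₃) + ψ₃ * ξ₂ = 0 ∧
      ψ₁ * ((2 / 3) * ξ₁ + (4 / 3) * ξ₂ + ξ₃) +
        ψ₂ * ((4 / 3) * ξ₁ + (2 / 3) * ξ₂) + ψ₃ * ξ₁ = 0 ∧
      ∀ Q : Matrix (Fin 3) (Fin 3) ℝ, Q.IsSymm → Q.trace = 0 →
        Qnop ψ₁ ψ₂ ψ₃ n (Qnop ξ₁ ξ₂ ξ₃ n Q) = Q ∧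
        Qnop ξ₁ ξ₂ ξ₃ n (Qnop ψ₁ ψ₂ ψ₃ n Q) = Q := by
  obtain ⟨ψ₃, E₃⟩ : ∃ ψ₃ : ℝ, ψ₃ * ξ₃ = 1 := ⟨ξ₃⁻¹, inv_mul_cancel₀ h3⟩
  obtain ⟨ψ₂, E₂⟩ : ∃ ψ₂ : ℝ, ψ₂ * (ξ₂ + ξ₃) + ψ₃ * ξ₂ = 0 :=
    ⟨-(ψ₃ * ξ₂) / (ξ₂ + ξ₃), by rw [div_mul_cancel₀ _ h23]; ring⟩
  obtain ⟨ψ₁, E₁⟩ : ∃ ψ₁ : ℝ, ψ₁ * ((2 / 3) * ξ₁ + (4 / 3) * ξ₂ + ξ₃) +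
      ψ₂ * ((4 / 3) * ξ₁ + (2 / 3) * ξ₂) + ψ₃ * ξ₁ = 0 :=
    ⟨-(ψ₂ * ((4 / 3) * ξ₁ + (2 / 3) * ξ₂) + ψ₃ * ξ₁) / ((2 / 3) * ξ₁ + (4 / 3) * ξ₂ + ξ₃),
      by rw [div_mul_cancel₀ _ h123]; ring⟩
  refine ⟨ψ₁, ψ₂, ψ₃, E₃, E₂, E₁, fun Q _ _ => ?_⟩
  have hn' : n ⬝ᵥ n = 1 := by simpa [dotProduct, sq] using hn
  have left_inv : Qnop ψ₁ ψ₂ ψ₃ n (Qnop ξ₁ ξ₂ ξ₃ n Q) = Q := by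
    rw [Qnop_Qnop hn', E₁, E₂, E₃, Qnop_zero_zero_one]
  exact ⟨left_inv, by rwa [← Qnop_comm hn']⟩
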